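/- Assume each r_i is real-valued and Lipschitz with respect to the L^p norm with constant c_i, i.e. |r_i(ξ) − r_i(η)| ≤ c_i‖ξ − η‖_p for all ξ, η ∈ L^p(Ω; ℝ). Then there exists a constant C > 0, depending only on c₁,…,c_d, such that for all set-valued portfolios 𝐗 and 𝐘 (with p-integrable selections) for which ω ↦ d_H(𝐗(ω), 𝐘(ω)) is measurable and p-integrable, one has d_H(ρ_s(𝐗), ρ_s(𝐘)) ≤ C‖d_H(𝐗, 𝐘)‖_p, where d_H denotes the (possibly infinite) Hausdorff distance between closed subsets of ℝ^d. -/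

import Mathlib

open MeasureTheory Set Filter
open scoped Pointwise ENNReal RealInnerProductSpace

noncomputable section

/-- `ℝ^d` with the Euclidean norm. -/
abbrev Vec (d : ℕ) := EuclideanSpace ℝ (Fin d)

/-- Effros measurability of a set-valued map: `{ω : X(ω) ∩ G ≠ ∅}` is measurable
for every open `G`. -/
def EffrosMeasurable {Ω : Type*} [MeasurableSpace Ω] {d : ℕ} (X : Ω → Set (Vec d)) : Prop :=
  ∀ G : Set (Vec d), IsOpen G → MeasurableSet {ω | (X ω ∩ G).Nonempty}

/-- A set-valued portfolio: an Effros-measurable map with nonempty closed convex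
lower-set values. -/
structure IsPortfolio {Ω : Type*} [MeasurableSpace Ω] {d : ℕ} (X : Ω → Set (Vec d)) : Prop where
  effros : EffrosMeasurable X
  nonempty : ∀ ω, (X ω).Nonempty
  isClosed : ∀ ω, IsClosed (X ω)
  convex : ∀ ω, Convex ℝ (X ω)
  lower : ∀ ω, ∀ x ∈ X ω, ∀ y : Vec d, (∀ i, y i ≤ x i) → y ∈ X ω

/-- A real-valued coherent risk measure on `L^p(Ω; ℝ)`: monotone (antitone in the gain),
cash invariant, subadditive and positively homogeneous. -/
structure IsCoherentR {Ω : Type*} [MeasurableSpace Ω] (μ : Measure Ω) (p : ℝ≥0∞)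
    (r : (Ω → ℝ) → ℝ) : Prop where
  mono : ∀ ξ η : Ω → ℝ, MemLp ξ p μ → MemLp η p μ → (∀ᵐ ω ∂μ, ξ ω ≤ η ω) → r η ≤ r ξ
  cash : ∀ ξ : Ω → ℝ, MemLp ξ p μ → ∀ c : ℝ, r (fun ω => ξ ω + c) = r ξ - c
  subadd : ∀ ξ η : Ω → ℝ, MemLp ξ p μ → MemLp η p μ →
    r (fun ω => ξ ω + η ω) ≤ r ξ + r η
  homog : ∀ ξ : Ω → ℝ, MemLp ξ p μ → ∀ c : ℝ, 0 < c →
    r (fun ω => c * ξ ω) = c * r ξ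

/-- The selection risk measure `ρ_{s,0}(𝐗)` (real-valued marginal risk measures). -/
def rho0R {Ω : Type*} [MeasurableSpace Ω] (μ : Measure Ω) (p : ℝ≥0∞) {d : ℕ}
    (r : Fin d → (Ω → ℝ) → ℝ) (X : Ω → Set (Vec d)) : Set (Vec d) :=
  {x | ∃ ξ : Ω → Vec d, MemLp ξ p μ ∧ (∀ᵐ ω ∂μ, ξ ω ∈ X ω) ∧
        ∀ i, r i (fun ω => ξ ω i + x i) ≤ 0}

/-!
Let `h(ω) = d_H(𝐗(ω), 𝐘(ω))` and `𝟙 = (1, …, 1)`. If `ξ` is a selection of `𝐗`, then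
`ξ(ω)` is within distance `h(ω)` of some point of `𝐘(ω)`, so `ξ(ω) - h(ω) 𝟙` lies below that
point and hence in the lower set `𝐘(ω)`. Lipschitz continuity and cash invariance of `r_i`
give `r_i(ξ_i - h + x_i + C₀ ‖h‖_p) ≤ r_i(ξ_i + x_i) + (c_i - C₀) ‖h‖_p ≤ 0` for `C₀ ≥ max c_i`,
so `x + C₀ ‖h‖_p 𝟙 ∈ ρ_{s,0}(𝐘)` for every `x ∈ ρ_{s,0}(𝐗)`. This shift has length
`C₀ ‖h‖_p ‖𝟙‖`, and the argument is symmetric in `𝐗` and `𝐘`.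
-/

def onesVec (d : ℕ) : Vec d := WithLp.toLp 2 fun _ => 1

@[simp]
lemma onesVec_apply {d : ℕ} (i : Fin d) : onesVec d i = 1 := rfl

lemma sub_smul_onesVec_mem_of_infDist_le {d : ℕ} {S : Set (Vec d)} (hS : IsClosed S)
    (hne : S.Nonempty) (hlower : ∀ x ∈ S, ∀ y : Vec d, (∀ i, y i ≤ x i) → y ∈ S)
    {v : Vec d} {t : ℝ} (ht : Metric.infDist v S ≤ t) : v - t • onesVec d ∈ S := by
  obtain ⟨y, hyS, hy⟩ := hS.exists_infDist_eq_dist hne v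
  refine hlower y hyS _ fun i => ?_
  have hcoord : |v i - y i| ≤ dist v y := by
    simpa [Real.dist_eq] using PiLp.dist_apply_le v y i
  simp only [PiLp.sub_apply, PiLp.smul_apply, onesVec_apply, smul_eq_mul, mul_one]
  linarith [le_abs_self (v i - y i)]

lemma Metric.infEDist_le_ofReal_norm_of_add_mem {E : Type*} [SeminormedAddCommGroup E]
    {x v : E} {T : Set E} (h : x + v ∈ T) : Metric.infEDist x T ≤ ENNReal.ofReal ‖v‖ := by
  calc Metric.infEDist x T ≤ edist x (x + v) := Metric.infEDist_le_edist_of_mem h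
    _ = ENNReal.ofReal ‖v‖ := by rw [edist_dist, dist_self_add_right]

section

variable {Ω : Type*} [MeasurableSpace Ω] {μ : Measure Ω} {p : ℝ≥0∞}

lemma IsCoherentR.apply_sub_add_le {r : (Ω → ℝ) → ℝ} (hr : IsCoherentR μ p r) {c : ℝ}
    (hlip : ∀ ξ η : Ω → ℝ, MemLp ξ p μ → MemLp η p μ →
      |r ξ - r η| ≤ c * (eLpNorm (fun ω => ξ ω - η ω) p μ).toReal)
    {ζ h : Ω → ℝ} (hζ : MemLp ζ p μ) (hh : MemLp h p μ) (a : ℝ) :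
    r (fun ω => ζ ω - h ω + a) ≤ r ζ + c * (eLpNorm h p μ).toReal - a := by
  rw [hr.cash (fun ω => ζ ω - h ω) (hζ.sub hh) a]
  have hdiff := (abs_le.mp (hlip (fun ω => ζ ω - h ω) ζ (hζ.sub hh) hζ)).2
  have hnorm : eLpNorm (fun ω => ζ ω - h ω - ζ ω) p μ = eLpNorm h p μ := by
    simp only [sub_sub_cancel_left]; exact eLpNorm_neg h p μ
  rw [hnorm] at hdiff
  linarith

lemma add_smul_onesVec_mem_rho0R [IsFiniteMeasure μ] {d : ℕ} {r : Fin d → (Ω → ℝ) → ℝ}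
    {c : Fin d → ℝ} (hr : ∀ i, IsCoherentR μ p (r i))
    (hlip : ∀ i, ∀ ξ η : Ω → ℝ, MemLp ξ p μ → MemLp η p μ →
      |r i ξ - r i η| ≤ c i * (eLpNorm (fun ω => ξ ω - η ω) p μ).toReal)
    {C₀ : ℝ} (hC₀ : ∀ i, c i ≤ C₀) {X Y : Ω → Set (Vec d)} (hY : IsPortfolio Y)
    {h : Ω → ℝ} (hh : MemLp h p μ) (hXY : ∀ᵐ ω ∂μ, ∀ v ∈ X ω, Metric.infDist v (Y ω) ≤ h ω)
    {x : Vec d} (hx : x ∈ rho0R μ p r X) :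
    x + (C₀ * (eLpNorm h p μ).toReal) • onesVec d ∈ rho0R μ p r Y := by
  obtain ⟨ξ, hξ, hξX, hξr⟩ := hx
  set K := (eLpNorm h p μ).toReal
  refine ⟨fun ω => ξ ω - h ω • onesVec d,
    hξ.sub ((ContinuousLinearMap.toSpanSingleton ℝ (onesVec d)).comp_memLp' hh), ?_, fun i => ?_⟩
  · filter_upwards [hξX, hXY] with ω hξω hω
    exact sub_smul_onesVec_mem_of_infDist_le (hY.isClosed ω) (hY.nonempty ω) (hY.lower ω)
      (hω _ hξω)
  · have hξi : MemLp (fun ω => ξ ω i + x i) p μ :=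
      ((EuclideanSpace.proj i (𝕜 := ℝ)).comp_memLp' hξ).add (memLp_const (x i))
    have hcK : c i * K ≤ C₀ * K := mul_le_mul_of_nonneg_right (hC₀ i) ENNReal.toReal_nonneg
    calc r i (fun ω => (ξ ω - h ω • onesVec d) i + (x + (C₀ * K) • onesVec d) i)
        = r i (fun ω => ξ ω i + x i - h ω + C₀ * K) := by
          congr 1; funext ω; simp only [PiLp.sub_apply, PiLp.add_apply, PiLp.smul_apply,
            onesVec_apply, smul_eq_mul, mul_one]; ring
      _ ≤ r i (fun ω => ξ ω i + x i) + c i * K - C₀ * K :=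
          (hr i).apply_sub_add_le (ζ := fun ω => ξ ω i + x i) (hlip i) hξi hh (C₀ * K)
      _ ≤ 0 := by linarith [hξr i]

end

theorem statement5 {Ω : Type*} [MeasurableSpace Ω] (μ : Measure Ω) [IsProbabilityMeasure μ]
    {d : ℕ} (p : ℝ≥0∞)
    (r : Fin d → (Ω → ℝ) → ℝ) (c : Fin d → ℝ)
    (hr : ∀ i, IsCoherentR μ p (r i))
    (hlip : ∀ i, ∀ ξ η : Ω → ℝ, MemLp ξ p μ → MemLp η p μ →
      |r i ξ - r i η| ≤ c i * (eLpNorm (fun ω => ξ ω - η ω) p μ).toReal) :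
    ∃ C > (0 : ℝ), ∀ X Y : Ω → Set (Vec d), IsPortfolio X → IsPortfolio Y →
      (∃ ξ : Ω → Vec d, MemLp ξ p μ ∧ ∀ᵐ ω ∂μ, ξ ω ∈ X ω) →
      (∃ η : Ω → Vec d, MemLp η p μ ∧ ∀ᵐ ω ∂μ, η ω ∈ Y ω) →
      (∀ᵐ ω ∂μ, EMetric.hausdorffEdist (X ω) (Y ω) ≠ ⊤) →
      MemLp (fun ω => (EMetric.hausdorffEdist (X ω) (Y ω)).toReal) p μ →
      EMetric.hausdorffEdist (closure (rho0R μ p r X)) (closure (rho0R μ p r Y)) ≤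
        ENNReal.ofReal
          (C * (eLpNorm (fun ω => (EMetric.hausdorffEdist (X ω) (Y ω)).toReal) p μ).toReal) := by
  set C₀ : ℝ := 1 + ∑ i, |c i|
  have hC₀ : ∀ i, c i ≤ C₀ := fun i => (le_abs_self _).trans <|
    (Finset.single_le_sum (fun j _ => abs_nonneg (c j)) (Finset.mem_univ i)).trans
      (le_add_of_nonneg_left zero_le_one)
  have hC₀pos : 0 < C₀ := by positivity
  -- `‖onesVec d‖ = √d`; the `+ 1` keeps the constant positive when `d = 0`.
  refine ⟨C₀ * (‖onesVec d‖ + 1), by positivity, fun X Y hX hY _ _ hfin hK => ?_⟩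
  set K := (eLpNorm (fun ω => (EMetric.hausdorffEdist (X ω) (Y ω)).toReal) p μ).toReal
  have hbound : ∀ {x : Vec d} {T : Set (Vec d)}, x + (C₀ * K) • onesVec d ∈ T →
      Metric.infEDist x T ≤ ENNReal.ofReal (C₀ * (‖onesVec d‖ + 1) * K) := fun hx =>
    (Metric.infEDist_le_ofReal_norm_of_add_mem hx).trans <| ENNReal.ofReal_le_ofReal <| by
      have hK0 : 0 ≤ K := ENNReal.toReal_nonneg
      rw [norm_smul, Real.norm_of_nonneg (by positivity)]
      nlinarith
  have hXY : ∀ᵐ ω ∂μ, ∀ v ∈ X ω, Metric.infDist v (Y ω) ≤ Metric.hausdorffDist (X ω) (Y ω) :=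
    hfin.mono fun ω hω v hv => Metric.infDist_le_hausdorffDist_of_mem hv hω
  have hYX : ∀ᵐ ω ∂μ, ∀ v ∈ Y ω, Metric.infDist v (X ω) ≤ Metric.hausdorffDist (X ω) (Y ω) :=
    hfin.mono fun ω hω v hv => Metric.hausdorffDist_comm (s := X ω) ▸
      Metric.infDist_le_hausdorffDist_of_mem hv (Metric.hausdorffEDist_comm.trans_ne hω)
  change Metric.hausdorffEDist (closure _) (closure _) ≤ _
  rw [Metric.hausdorffEDist_closure]
  exact Metric.hausdorffEDist_le_of_infEDist
    (fun x hx => hbound (add_smul_onesVec_mem_rho0R hr hlip hC₀ hY hK hXY hx))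
    (fun x hx => hbound (add_smul_onesVec_mem_rho0R hr hlip hC₀ hX hK hYX hx))
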